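/- Let D be a finite reflexive digraph. The avoidance class Av(D) within all finite reflexive digraphs under the surjective homomorphism ordering is well quasi-ordered if and only if D is isomorphic to a partial subcomplete digraph N⃗_{n,k} with 2k < n. -/

import Mathlib

/-- A finite structure with a single binary relation (digraph/graph model). -/
structure FinBinRel where
  n : ℕ
  rel : Fin n → Fin n → Prop

/-- `f` is a homomorphism from `A` to `B`: it maps related pairs to related pairs. -/
def IsHom (A B : FinBinRel) (f : Fin A.n → Fin B.n) : Prop :=
  ∀ x y, A.rel x y → B.rel (f x) (f y)

/-- `f` is a strong homomorphism: a homomorphism such that every related pair of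
elements of the image is the image of a related pair. -/
def IsStrongHom (A B : FinBinRel) (f : Fin A.n → Fin B.n) : Prop :=
  IsHom A B f ∧
    ∀ p q : Fin B.n, B.rel p q → (∃ a, f a = p) → (∃ b, f b = q) →
      ∃ u v, A.rel u v ∧ f u = p ∧ f v = q

/-- Homomorphic image ordering: `A ⪯ B` iff there is a surjective homomorphism `B → A`. -/
def HomLe (A B : FinBinRel) : Prop :=
  ∃ f : Fin B.n → Fin A.n, Function.Surjective f ∧ IsHom B A f

/-- Strong homomorphic image ordering: `A ⪯ B` iff there is a surjective strong
homomorphism `B → A`. -/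
def StrongLe (A B : FinBinRel) : Prop :=
  ∃ f : Fin B.n → Fin A.n, Function.Surjective f ∧ IsStrongHom B A f

/-- Isomorphism of binary relational structures. -/
def BinIso (A B : FinBinRel) : Prop :=
  ∃ e : Fin A.n ≃ Fin B.n, ∀ x y, A.rel x y ↔ B.rel (e x) (e y)

/-- A class `C` is well quasi-ordered by `r`: every infinite sequence of members of `C`
contains a "good pair". (For orderings on finite structures respecting size this is
equivalent to having no infinite antichain.) -/
def IsWqo (r : FinBinRel → FinBinRel → Prop) (C : Set FinBinRel) : Prop :=
  ∀ f : ℕ → FinBinRel, (∀ i, f i ∈ C) → ∃ i j, i < j ∧ r (f i) (f j)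

/-- A reflexive graph: symmetric relation with a loop at every vertex. -/
def ReflGraph (A : FinBinRel) : Prop :=
  (∀ x, A.rel x x) ∧ (∀ x y, A.rel x y → A.rel y x)

/-- An irreflexive graph: symmetric and loopless. -/
def IrrGraph (A : FinBinRel) : Prop :=
  (∀ x, ¬ A.rel x x) ∧ (∀ x y, A.rel x y → A.rel y x)

/-- The irreflexive complete graph on `n` vertices. -/
def Kirr (n : ℕ) : FinBinRel := ⟨n, fun i j => i ≠ j⟩

/-- The complete reflexive graph/digraph on `n` vertices (all pairs, including loops). -/
def Kcompl (n : ℕ) : FinBinRel := ⟨n, fun _ _ => True⟩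

/-- The subcomplete reflexive graph `N_{n,k}` (for `2k ≤ n`): the complete reflexive
graph on `n` vertices with the `k` disjoint edges `{0,1},{2,3},…,{2k-2,2k-1}` deleted. -/
def Ngraph (n k : ℕ) : FinBinRel :=
  ⟨n, fun i j => ¬ ∃ m, m < k ∧
      ((i.val = 2 * m ∧ j.val = 2 * m + 1) ∨ (j.val = 2 * m ∧ i.val = 2 * m + 1))⟩

/-- The subcomplete digraph `N⃗_{n,k}` (for `2k ≤ n`): the complete reflexive digraph
on `n` vertices with the `k` disjoint directed edges `(0,1),(2,3),…,(2k-2,2k-1)` removed. -/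
def Ndigraph (n k : ℕ) : FinBinRel :=
  ⟨n, fun i j => ¬ ∃ m, m < k ∧ i.val = 2 * m ∧ j.val = 2 * m + 1⟩

/-- `D` has a set of `k` pairwise disjoint edges (all `2k` endpoints distinct). -/
def HasDisjointEdges (D : FinBinRel) (k : ℕ) : Prop :=
  ∃ a b : Fin k → Fin D.n,
    Function.Injective (Sum.elim a b) ∧ ∀ i, D.rel (a i) (b i)

/-!
If `Av(D)` is well quasi-ordered, `D` is a surjective image of no member of an infinite
antichain of reflexive digraphs. Two antichains do the work: the complements `Cyc m` of
directed cycles with a universal vertex added, and the complements `AltCyc m` of alternating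
cycles. Images of the former keep at most one out- and one in-non-neighbour per vertex and a
universal vertex; images of the latter have no vertex that is both the tail and the head of
a non-edge. Hence the non-edges of `D` are `k` disjoint arcs missing a universal vertex, which
is `N⃗_{n,k}` with `2k < n`.

Conversely, a reflexive digraph with at least `n` vertices and `k` disjoint non-edges maps
onto `N⃗_{n,k}`, so in a large member of `Av(N⃗_{n,k})` a maximal family of disjoint non-edges
has fewer than `k` arcs and its endpoints, padded to a frame of `2k` vertices, meet every
non-edge. Outside the frame all arcs are present, so the digraph is described, as far as
surjective homomorphisms go, by the adjacencies inside the frame and by how many outer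
vertices have each of the finitely many ways of being joined to the frame; Dickson's lemma on
these counts gives the well quasi-order. The small members form a finite set.
-/

open Function

theorem HomLe.refl (A : FinBinRel) : HomLe A A :=
  ⟨id, surjective_id, fun _ _ h => h⟩

instance : Std.Refl HomLe := ⟨HomLe.refl⟩

theorem HomLe.trans {A B C : FinBinRel} (hAB : HomLe A B) (hBC : HomLe B C) : HomLe A C := by
  obtain ⟨f, hf, hf_hom⟩ := hAB
  obtain ⟨g, hg, hg_hom⟩ := hBC
  exact ⟨f ∘ g, hf.comp hg, fun x y h => hf_hom _ _ (hg_hom x y h)⟩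

theorem BinIso.homLe {A B : FinBinRel} (h : BinIso A B) : HomLe A B := by
  obtain ⟨e, he⟩ := h
  exact ⟨e.symm, e.symm.surjective, fun x y hxy => (he _ _).2 (by simpa using hxy)⟩

def Av (D : FinBinRel) : Set FinBinRel :=
  {E | (∀ x : Fin E.n, E.rel x x) ∧ ¬ HomLe D E}

theorem av_subset_av {D D' : FinBinRel} (h : HomLe D D') : Av D ⊆ Av D' :=
  fun _ hE => ⟨hE.1, fun h' => hE.2 (h.trans h')⟩

theorem IsWqo.holds_of_antichain {D : FinBinRel} (hwqo : IsWqo HomLe (Av D))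
    {P : FinBinRel → Prop} (hP : ∀ {A B}, HomLe A B → P B → P A) {F : ℕ → FinBinRel}
    (hF : ∀ i, (∀ x, (F i).rel x x) ∧ P (F i)) (hanti : ∀ i j, i < j → ¬ HomLe (F i) (F j)) :
    P D := by
  by_contra hD
  obtain ⟨i, j, hij, hle⟩ := hwqo F fun i => ⟨(hF i).1, fun h => hD (hP h (hF i).2)⟩
  exact hanti i j hij hle

namespace FinBinRel

abbrev compl (A : FinBinRel) : FinBinRel :=
  ⟨A.n, fun x y => ¬ A.rel x y⟩

def NonEdgeFunctional (A : FinBinRel) : Prop :=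
  ∀ x y y', ¬ A.rel x y → ¬ A.rel x y' → y = y'

def NonEdgeInjective (A : FinBinRel) : Prop :=
  ∀ x x' y, ¬ A.rel x y → ¬ A.rel x' y → x = x'

def NoNonEdgePath (A : FinBinRel) : Prop :=
  ∀ x y z, ¬ A.rel x y → ¬ A.rel y z → False

def HasUniversalVertex (A : FinBinRel) : Prop :=
  ∃ c, ∀ x, A.rel c x ∧ A.rel x c

def SharesTwoNonNbrs (A : FinBinRel) (u u' : Fin A.n) : Prop :=
  ∃ v v', v ≠ v' ∧
    ((¬ A.rel u v ∧ ¬ A.rel u v' ∧ ¬ A.rel u' v ∧ ¬ A.rel u' v') ∨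
      (¬ A.rel v u ∧ ¬ A.rel v' u ∧ ¬ A.rel v u' ∧ ¬ A.rel v' u'))

end FinBinRel

open FinBinRel

section Images

variable {A B : FinBinRel}

theorem HomLe.nonEdgeFunctional (h : HomLe A B) (hB : B.NonEdgeFunctional) :
    A.NonEdgeFunctional := by
  obtain ⟨f, hf, hf_hom⟩ := h
  intro x y y' hy hy'
  obtain ⟨u, rfl⟩ := hf x
  obtain ⟨v, rfl⟩ := hf y
  obtain ⟨v', rfl⟩ := hf y'
  exact congrArg f (hB u v v' (mt (hf_hom u v) hy) (mt (hf_hom u v') hy'))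

theorem HomLe.nonEdgeInjective (h : HomLe A B) (hB : B.NonEdgeInjective) :
    A.NonEdgeInjective := by
  obtain ⟨f, hf, hf_hom⟩ := h
  intro x x' y hx hx'
  obtain ⟨u, rfl⟩ := hf x
  obtain ⟨u', rfl⟩ := hf x'
  obtain ⟨v, rfl⟩ := hf y
  exact congrArg f (hB u u' v (mt (hf_hom u v) hx) (mt (hf_hom u' v) hx'))

theorem HomLe.noNonEdgePath (h : HomLe A B) (hB : B.NoNonEdgePath) : A.NoNonEdgePath := by
  obtain ⟨f, hf, hf_hom⟩ := h
  intro x y z hxy hyz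
  obtain ⟨u, rfl⟩ := hf x
  obtain ⟨v, rfl⟩ := hf y
  obtain ⟨w, rfl⟩ := hf z
  exact hB u v w (mt (hf_hom u v) hxy) (mt (hf_hom v w) hyz)

theorem HomLe.hasUniversalVertex (h : HomLe A B) (hB : B.HasUniversalVertex) :
    A.HasUniversalVertex := by
  obtain ⟨f, hf, hf_hom⟩ := h
  obtain ⟨c, hc⟩ := hB
  refine ⟨f c, fun x => ?_⟩
  obtain ⟨u, rfl⟩ := hf x
  exact ⟨hf_hom _ _ (hc u).1, hf_hom _ _ (hc u).2⟩

theorem IsHom.sharesTwoNonNbrs {f : Fin B.n → Fin A.n} (hf : Surjective f) (hf_hom : IsHom B A f)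
    {u u' : Fin B.n} (h : A.SharesTwoNonNbrs (f u) (f u')) : B.SharesTwoNonNbrs u u' := by
  obtain ⟨v, v', hne, h⟩ := h
  obtain ⟨y, rfl⟩ := hf v
  obtain ⟨y', rfl⟩ := hf v'
  refine ⟨y, y', fun h => hne (congrArg f h), ?_⟩
  rcases h with ⟨h1, h2, h3, h4⟩ | ⟨h1, h2, h3, h4⟩
  · exact Or.inl ⟨mt (hf_hom _ _) h1, mt (hf_hom _ _) h2, mt (hf_hom _ _) h3, mt (hf_hom _ _) h4⟩
  · exact Or.inr ⟨mt (hf_hom _ _) h1, mt (hf_hom _ _) h2, mt (hf_hom _ _) h3, mt (hf_hom _ _) h4⟩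

theorem IsHom.injective_of_sharesTwoNonNbrs {f : Fin B.n → Fin A.n} (hf : Surjective f)
    (hf_hom : IsHom B A f) (hA : ∀ p, A.SharesTwoNonNbrs p p)
    (hB : ∀ u u', B.SharesTwoNonNbrs u u' → u = u') : Injective f := by
  intro u u' h
  apply hB
  apply hf_hom.sharesTwoNonNbrs hf
  rw [← h]
  exact hA _

end Images

theorem add_one_mod_eq_iff {i j m : ℕ} (hi : i < m) :
    (i + 1) % m = j ↔ (i + 1 = j ∧ j < m) ∨ (i + 1 = m ∧ j = 0) := by
  rcases (show i + 1 ≤ m from hi).lt_or_eq with h | h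
  · rw [Nat.mod_eq_of_lt h]; omega
  · rw [h, Nat.mod_self]; omega

/-- The complement of the directed cycle `0 → 1 → ⋯ → m-1 → 0`, with an added vertex `m`
joined both ways to everything. -/
def Cyc (m : ℕ) : FinBinRel :=
  ⟨m + 1, fun i j => ¬ (i.val < m ∧ (i.val + 1) % m = j.val)⟩

theorem not_cyc_rel_iff {m : ℕ} {i j : Fin (Cyc m).n} :
    ¬ (Cyc m).rel i j ↔ (i.val + 1 = j.val ∧ j.val < m) ∨ (i.val + 1 = m ∧ j.val = 0) := by
  simp only [Cyc, not_not]
  constructor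
  · rintro ⟨hi, h⟩
    exact (add_one_mod_eq_iff hi).1 h
  · intro h
    have hi : i.val < m := by omega
    exact ⟨hi, (add_one_mod_eq_iff hi).2 h⟩

theorem cyc_rel_self {m : ℕ} (hm : 2 ≤ m) (x : Fin (Cyc m).n) : (Cyc m).rel x x := by
  by_contra h
  rw [not_cyc_rel_iff] at h
  omega

theorem cyc_nonEdgeFunctional (m : ℕ) : (Cyc m).NonEdgeFunctional := by
  intro x y y' hy hy'
  rw [not_cyc_rel_iff] at hy hy'
  exact Fin.ext (by omega)

theorem cyc_nonEdgeInjective (m : ℕ) : (Cyc m).NonEdgeInjective := by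
  intro x x' y hx hx'
  rw [not_cyc_rel_iff] at hx hx'
  exact Fin.ext (by omega)

theorem cyc_hasUniversalVertex (m : ℕ) : (Cyc m).HasUniversalVertex := by
  refine ⟨⟨m, Nat.lt_succ_self m⟩, fun x => ⟨?_, ?_⟩⟩ <;>
  · have hx : x.val < m + 1 := x.isLt
    by_contra h
    rw [not_cyc_rel_iff] at h
    simp only at h
    omega

theorem not_homLe_cyc {m m' : ℕ} (hm : 2 ≤ m) (hmm' : m < m') : ¬ HomLe (Cyc m) (Cyc m') := by
  rintro ⟨f, hf, hf_hom⟩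
  -- Preimages `x i` of the vertices `i % m` walk around the `m'`-cycle, and `x m = x 0`.
  have hmod : ∀ i, i % m < m := fun i => Nat.mod_lt i (by omega)
  let x : ℕ → Fin (m' + 1) := fun i => surjInv hf ⟨i % m, Nat.lt_succ_of_lt (hmod i)⟩
  have hfx : ∀ i, f (x i) = ⟨i % m, Nat.lt_succ_of_lt (hmod i)⟩ := fun i => surjInv_eq hf _
  have hstep : ∀ i, (x i).val < m' ∧ ((x i).val + 1) % m' = (x (i + 1)).val := by
    intro i
    have hnon : ¬ (Cyc m).rel (f (x i)) (f (x (i + 1))) := by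
      rw [hfx, hfx]
      simp only [Cyc, not_not]
      exact ⟨hmod i, Nat.mod_add_mod i m 1⟩
    simpa only [Cyc, not_not] using mt (hf_hom _ _) hnon
  have hx : ∀ i, (x i).val = ((x 0).val + i) % m' := by
    intro i
    induction i with
    | zero => exact (Nat.mod_eq_of_lt (hstep 0).1).symm
    | succ i ih => rw [← (hstep i).2, ih, Nat.mod_add_mod, add_assoc]
  have hperiod : x m = x 0 := by simp [x]
  have hdvd : m' ∣ m := by
    have h : (x 0).val + m ≡ (x 0).val + 0 [MOD m'] := by
      rw [Nat.ModEq, add_zero, ← hx m, hperiod, Nat.mod_eq_of_lt (hstep 0).1]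
    exact Nat.modEq_zero_iff_dvd.1 (Nat.ModEq.add_left_cancel' _ h)
  exact absurd (Nat.le_of_dvd (by omega) hdvd) (by omega)

/-- The complement of the alternating `2m`-cycle, all of whose arcs leave the even vertices:
`2i → 2i + 1` and `2i → 2i - 1 (mod 2m)`. -/
def AltCyc (m : ℕ) : FinBinRel :=
  ⟨2 * m, fun i j => ¬ (i.val % 2 = 0 ∧
      (j.val = i.val + 1 ∨ i.val = j.val + 1 ∨ (i.val = 0 ∧ j.val = 2 * m - 1)))⟩

theorem altCyc_rel_self (m : ℕ) (x : Fin (2 * m)) : (AltCyc m).rel x x := by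
  rintro ⟨-, h⟩
  omega

theorem altCyc_noNonEdgePath (m : ℕ) : (AltCyc m).NoNonEdgePath := by
  intro x y z hxy hyz
  simp only [AltCyc, not_not] at hxy hyz
  omega

theorem altCyc_sharesTwoNonNbrs_self {m : ℕ} (hm : 2 ≤ m) (p : Fin (2 * m)) :
    (AltCyc m).SharesTwoNonNbrs p p := by
  have hp := p.isLt
  simp only [SharesTwoNonNbrs, AltCyc, not_not, ne_eq, Fin.ext_iff]
  rcases Nat.mod_two_eq_zero_or_one p.val with h | h
  · refine ⟨⟨p + 1, by omega⟩, ⟨if p.val = 0 then 2 * m - 1 else p - 1, by split_ifs <;> omega⟩,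
      ?_, Or.inl ?_⟩ <;> split_ifs <;> dsimp only <;> omega
  · refine ⟨⟨p - 1, by omega⟩, ⟨if p.val = 2 * m - 1 then 0 else p + 1, by split_ifs <;> omega⟩,
      ?_, Or.inr ?_⟩ <;> split_ifs <;> dsimp only <;> omega

theorem altCyc_eq_of_sharesTwoNonNbrs {m : ℕ} (hm : 3 ≤ m) {u u' : Fin (2 * m)}
    (h : (AltCyc m).SharesTwoNonNbrs u u') : u = u' := by
  obtain ⟨v, v', hne, h⟩ := h
  simp only [AltCyc, not_not, Fin.ext_iff] at h hne ⊢
  rcases h with ⟨⟨-, h1⟩, ⟨-, h2⟩, ⟨-, h3⟩, ⟨-, h4⟩⟩ | ⟨⟨-, h1⟩, ⟨-, h2⟩, ⟨-, h3⟩, ⟨-, h4⟩⟩ <;>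
  · rcases h1 with h1 | h1 | h1 <;> rcases h2 with h2 | h2 | h2 <;>
      rcases h3 with h3 | h3 | h3 <;> rcases h4 with h4 | h4 | h4 <;> omega

theorem not_homLe_altCyc {m m' : ℕ} (hm : 3 ≤ m) (hmm' : m < m') :
    ¬ HomLe (AltCyc m) (AltCyc m') := by
  rintro ⟨f, hf, hf_hom⟩
  have hinj := hf_hom.injective_of_sharesTwoNonNbrs hf (altCyc_sharesTwoNonNbrs_self (by omega))
    fun _ _ => altCyc_eq_of_sharesTwoNonNbrs (by omega)
  have : 2 * m' ≤ 2 * m := Fin.le_of_injective f hinj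
  omega

theorem exists_perm_comp_eq {ι α : Type*} [Finite α] {f g : ι → α} (hf : Injective f)
    (hg : Injective g) : ∃ π : Equiv.Perm α, ∀ i, π (f i) = g i := by
  classical
  let e : Set.range f ≃ Set.range g := (Equiv.ofInjective f hf).symm.trans (Equiv.ofInjective g hg)
  refine ⟨e.extendSubtype, fun i => ?_⟩
  rw [Equiv.extendSubtype_apply_of_mem e _ ⟨i, rfl⟩]
  simp [e]

theorem exists_perm_pairSlots {N k : ℕ} {a b : Fin k → Fin N} (hab : Injective (Sum.elim a b)) :
    ∃ π : Equiv.Perm (Fin N), ∀ (i : Fin k) x,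
      ((π x).val = 2 * i ↔ x = a i) ∧ ((π x).val = 2 * i + 1 ↔ x = b i) := by
  have hN : 2 * k ≤ N := by simpa [two_mul] using Fintype.card_le_of_injective _ hab
  let slot : Fin k ⊕ Fin k → Fin N :=
    Sum.elim (fun i => ⟨2 * i, by omega⟩) (fun i => ⟨2 * i + 1, by omega⟩)
  have hslot : Injective slot :=
    Sum.elim_injective.2 ⟨fun i j h => by simpa [Fin.ext_iff] using h,
      fun i j h => by simpa [Fin.ext_iff] using h,
      fun i j h => by simp only [Fin.ext_iff] at h; omega⟩
  obtain ⟨π, hπ⟩ := exists_perm_comp_eq hab hslot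
  have ha : ∀ i, π (a i) = slot (Sum.inl i) := fun i => hπ (Sum.inl i)
  have hb : ∀ i, π (b i) = slot (Sum.inr i) := fun i => hπ (Sum.inr i)
  refine ⟨π, fun i x => ⟨⟨fun h => π.injective ?_, ?_⟩, ⟨fun h => π.injective ?_, ?_⟩⟩⟩
  · rw [ha]; exact Fin.ext h
  · rintro rfl; rw [ha]; rfl
  · rw [hb]; exact Fin.ext h
  · rintro rfl; rw [hb]; rfl

theorem exists_nonEdge_enum {D : FinBinRel} (h₁ : D.NonEdgeFunctional) (h₂ : D.NonEdgeInjective)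
    (h₃ : D.NoNonEdgePath) : ∃ (k : ℕ) (a b : Fin k → Fin D.n),
      Injective (Sum.elim a b) ∧ ∀ x y, ¬ D.rel x y ↔ ∃ i, a i = x ∧ b i = y := by
  classical
  let e := Fintype.equivFin {p : Fin D.n × Fin D.n // ¬ D.rel p.1 p.2}
  have he : ∀ i, ¬ D.rel (e.symm i).1.1 (e.symm i).1.2 := fun i => (e.symm i).2
  refine ⟨_, fun i => (e.symm i).1.1, fun i => (e.symm i).1.2,
    Sum.elim_injective.2 ⟨fun i j h => ?_, fun i j h => ?_, fun i j h => ?_⟩, fun x y => ⟨?_, ?_⟩⟩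
  · replace h : (e.symm i).1.1 = (e.symm j).1.1 := h
    exact e.symm.injective (Subtype.ext (Prod.ext h (h₁ _ _ _ (he i) (h ▸ he j))))
  · replace h : (e.symm i).1.2 = (e.symm j).1.2 := h
    exact e.symm.injective (Subtype.ext (Prod.ext (h₂ _ _ _ (he i) (h ▸ he j)) h))
  · replace h : (e.symm i).1.1 = (e.symm j).1.2 := h
    exact h₃ _ _ _ (he j) (h ▸ he i)
  · exact fun h => ⟨e ⟨(x, y), h⟩, by simp⟩
  · rintro ⟨i, rfl, rfl⟩
    exact he i

theorem exists_binIso_ndigraph {D : FinBinRel} (h₁ : D.NonEdgeFunctional)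
    (h₂ : D.NonEdgeInjective) (h₃ : D.NoNonEdgePath) (h₄ : D.HasUniversalVertex) :
    ∃ n k, 2 * k < n ∧ BinIso D (Ndigraph n k) := by
  obtain ⟨k, a, b, hab, hnon⟩ := exists_nonEdge_enum h₁ h₂ h₃
  obtain ⟨c, hc⟩ := h₄
  have hc_free : c ∉ Set.range (Sum.elim a b) := by
    rintro ⟨i | i, rfl⟩
    · exact (hnon _ _).2 ⟨i, rfl, rfl⟩ (hc (b i)).1
    · exact (hnon _ _).2 ⟨i, rfl, rfl⟩ (hc (a i)).2
  obtain ⟨π, hπ⟩ := exists_perm_pairSlots hab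
  refine ⟨D.n, k, by simpa [two_mul] using Fintype.card_lt_of_injective_of_notMem _ hab hc_free,
    π, fun x y => ?_⟩
  show D.rel x y ↔ ¬ ∃ m, m < k ∧ (π x).val = 2 * m ∧ (π y).val = 2 * m + 1
  rw [← not_iff_not, not_not, hnon]
  constructor
  · rintro ⟨i, rfl, rfl⟩
    exact ⟨i, i.isLt, ((hπ i _).1.2 rfl), (hπ i _).2.2 rfl⟩
  · rintro ⟨m, hm, hx, hy⟩
    exact ⟨⟨m, hm⟩, ((hπ _ x).1.1 hx).symm, ((hπ _ y).2.1 hy).symm⟩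

theorem finite_setOf_n_lt (m : ℕ) : {E : FinBinRel | E.n < m}.Finite := by
  refine (Set.finite_range fun E : Σ i : Fin m, (Fin i → Fin i → Prop) =>
    (⟨E.1, E.2⟩ : FinBinRel)).subset fun E hE => ?_
  exact ⟨⟨⟨E.n, hE⟩, E.rel⟩, rfl⟩

theorem homLe_ndigraph {n k : ℕ} {E : FinBinRel} (hkn : 2 * k < n) (hn : n ≤ E.n)
    (h : HasDisjointEdges E.compl k) : HomLe (Ndigraph n k) E := by
  obtain ⟨a, b, hab, hnon⟩ := h
  obtain ⟨π, hπ⟩ := exists_perm_pairSlots (N := E.n) hab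
  refine ⟨fun x => (⟨min (π x) (n - 1), by omega⟩ : Fin n),
    fun t : Fin n => ⟨π.symm ⟨t, by omega⟩,
      Fin.ext (by simp only [Equiv.apply_symm_apply, inf_eq_left]; omega)⟩, ?_⟩
  rintro x y hxy ⟨m, hm, hx, hy⟩
  simp only at hx hy
  have hx : x = a ⟨m, hm⟩ := (hπ ⟨m, hm⟩ x).1.1 (by show (π x).val = 2 * m; omega)
  have hy : y = b ⟨m, hm⟩ := (hπ ⟨m, hm⟩ y).2.1 (by show (π y).val = 2 * m + 1; omega)
  subst hx hy
  exact hnon _ hxy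

theorem hasDisjointEdges_succ {A : FinBinRel} {k : ℕ} {a b : Fin k → Fin A.n}
    (hab : Injective (Sum.elim a b)) (hrel : ∀ i, A.rel (a i) (b i)) {x y : Fin A.n}
    (hx : x ∉ Set.range (Sum.elim a b)) (hy : y ∉ Set.range (Sum.elim a b)) (hxy : x ≠ y)
    (h : A.rel x y) : HasDisjointEdges A (k + 1) := by
  obtain ⟨ha, hb, hab⟩ := Sum.elim_injective.1 hab
  have hxa : ∀ i, a i ≠ x := fun i h => hx ⟨Sum.inl i, h⟩
  have hyb : ∀ i, b i ≠ y := fun i h => hy ⟨Sum.inr i, h⟩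
  have hya : ∀ i, a i ≠ y := fun i h => hy ⟨Sum.inl i, h⟩
  have hxb : ∀ i, b i ≠ x := fun i h => hx ⟨Sum.inr i, h⟩
  refine ⟨Fin.snoc a x, Fin.snoc b y, Sum.elim_injective.2 ⟨Fin.snoc_injective_iff.2
    ⟨ha, fun ⟨i, h⟩ => hxa i h⟩, Fin.snoc_injective_iff.2 ⟨hb, fun ⟨i, h⟩ => hyb i h⟩, ?_⟩, ?_⟩
  · intro i j
    induction i using Fin.lastCases <;> induction j using Fin.lastCases <;>
      simp only [Fin.snoc_castSucc, Fin.snoc_last] <;> grind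
  · intro i
    induction i using Fin.lastCases <;> simp only [Fin.snoc_castSucc, Fin.snoc_last] <;> grind

theorem hasDisjointEdges_compl_or_exists_cover {A : FinBinRel} (hA : ∀ x, A.rel x x) (k : ℕ) :
    HasDisjointEdges A.compl k ∨
      ∃ C : Finset (Fin A.n), C.card < 2 * k ∧ ∀ x y, ¬ A.rel x y → x ∈ C ∨ y ∈ C := by
  induction k with
  | zero => exact Or.inl ⟨Fin.elim0, Fin.elim0, injective_of_subsingleton _, fun i => i.elim0⟩
  | succ k ih =>
    obtain ⟨a, b, hab, hnon⟩ | ⟨C, hC, hcov⟩ := ih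
    · by_cases hcov : ∀ x y, ¬ A.rel x y →
          x ∈ Set.range (Sum.elim a b) ∨ y ∈ Set.range (Sum.elim a b)
      · refine Or.inr ⟨Finset.univ.image (Sum.elim a b), ?_,
          by simpa only [mem_image_univ_iff_mem_range] using hcov⟩
        calc _ ≤ Fintype.card (Fin k ⊕ Fin k) := Finset.card_image_le
          _ < 2 * (k + 1) := by simp only [Fintype.card_sum, Fintype.card_fin]; omega
      · push Not at hcov
        obtain ⟨x, y, hxy, hx, hy⟩ := hcov
        exact Or.inl (hasDisjointEdges_succ (A := A.compl) hab hnon hx hy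
          (fun h => hxy (h ▸ hA x)) hxy)
    · exact Or.inr ⟨C, by omega, hcov⟩

def IsNonEdgeCover (A : FinBinRel) {s : ℕ} (w : Fin s → Fin A.n) : Prop :=
  Injective w ∧ ∀ x y, ¬ A.rel x y → x ∈ Set.range w ∨ y ∈ Set.range w

theorem exists_isNonEdgeCover {A : FinBinRel} (hA : ∀ x, A.rel x x) {k : ℕ} (hk : 2 * k ≤ A.n)
    (h : ¬ HasDisjointEdges A.compl k) : ∃ w : Fin (2 * k) → Fin A.n, IsNonEdgeCover A w := by
  obtain ⟨C, hC, hcov⟩ := (hasDisjointEdges_compl_or_exists_cover hA k).resolve_left h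
  obtain ⟨t, hCt, ht⟩ := Finset.exists_superset_card_eq (n := 2 * k) hC.le (by simpa using hk)
  let e := t.equivFinOfCardEq ht
  have hmem : ∀ x ∈ C, x ∈ Set.range fun i => (e.symm i).1 :=
    fun x hx => ⟨e ⟨x, hCt hx⟩, by simp⟩
  exact ⟨fun i => (e.symm i).1, Subtype.val_injective.comp e.symm.injective,
    fun x y hxy => (hcov x y hxy).imp (hmem x) (hmem y)⟩

theorem exists_surjective_fiberwise {α β T : Type*} [Finite α] [Finite β] (τa : α → T)
    (τb : β → T) (hcard : ∀ t, Nat.card {b // τb b = t} ≤ Nat.card {a // τa a = t})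
    (hrange : Set.range τa ⊆ Set.range τb) : ∃ H : α → β, Surjective H ∧ ∀ a, τb (H a) = τa a := by
  classical
  have hfiber : ∀ t, ∃ σ : {a // τa a = t} → {b // τb b = t}, Surjective σ := by
    intro t
    have := Fintype.ofFinite α
    have := Fintype.ofFinite β
    refine exists_surjective_iff.2 ⟨?_, Function.Embedding.nonempty_of_card_le ?_⟩
    · by_cases ha : Nonempty {a // τa a = t}
      · obtain ⟨⟨a, rfl⟩⟩ := ha
        obtain ⟨b, hb⟩ := hrange ⟨a, rfl⟩
        exact ⟨fun _ => ⟨b, hb⟩⟩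
      · exact ⟨fun a => (ha ⟨a⟩).elim⟩
    · simpa only [Nat.card_eq_fintype_card] using hcard t
  choose σ hσ using hfiber
  have hσ_val : ∀ t (a : {a // τa a = t}), (σ (τa a.1) ⟨a.1, rfl⟩).1 = (σ t a).1 := by
    rintro t ⟨a, rfl⟩
    rfl
  refine ⟨fun a => σ (τa a) ⟨a, rfl⟩, fun b => ?_, fun a => (σ (τa a) ⟨a, rfl⟩).2⟩
  obtain ⟨a, ha⟩ := hσ (τb b) ⟨b, rfl⟩
  exact ⟨a.1, (hσ_val _ a).trans (congrArg Subtype.val ha)⟩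

def outerType (A : FinBinRel) {s : ℕ} (w : Fin s → Fin A.n) (v : {v // v ∉ Set.range w}) :
    Fin s → Prop × Prop :=
  fun p => (A.rel v (w p), A.rel (w p) v)

/-- The first component ranges over a finite type, so profiles are well quasi-ordered by
equality there and `≤` on the counts (Dickson's lemma). -/
noncomputable def frameProfile (A : FinBinRel) {s : ℕ} (w : Fin s → Fin A.n) :
    ((Fin s → Fin s → Prop) × Set (Fin s → Prop × Prop)) × ((Fin s → Prop × Prop) → ℕ) :=
  ((fun p q => A.rel (w p) (w q), Set.range (outerType A w)),
    fun t => Nat.card {v // outerType A w v = t})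

theorem homLe_of_frameProfile {A B : FinBinRel} {s : ℕ} {w : Fin s → Fin A.n}
    {w' : Fin s → Fin B.n} (hw : IsNonEdgeCover A w) (hw' : Injective w')
    (h₁ : (frameProfile A w).1 = (frameProfile B w').1)
    (h₂ : (frameProfile A w).2 ≤ (frameProfile B w').2) : HomLe A B := by
  classical
  simp only [frameProfile, Prod.mk.injEq] at h₁
  obtain ⟨htab, hrange⟩ := h₁
  obtain ⟨H, hH, hH_type⟩ :=
    exists_surjective_fiberwise (outerType B w') (outerType A w) h₂ hrange.ge
  let g : Fin B.n → Fin A.n := fun x =>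
    if hx : x ∈ Set.range w' then w ((Equiv.ofInjective w' hw').symm ⟨x, hx⟩) else H ⟨x, hx⟩
  have hg_frame : ∀ p, g (w' p) = w p := fun p => by simp [g]
  have hg_outer : ∀ x (hx : x ∉ Set.range w'), g x = H ⟨x, hx⟩ := fun x hx => dif_neg hx
  refine ⟨g, fun y => ?_, fun x y hxy => ?_⟩
  · by_cases hy : y ∈ Set.range w
    · obtain ⟨p, rfl⟩ := hy
      exact ⟨w' p, hg_frame p⟩
    · obtain ⟨⟨x, hx⟩, hxy⟩ := hH ⟨y, hy⟩
      exact ⟨x, by rw [hg_outer x hx, hxy]⟩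
  · by_cases hx : x ∈ Set.range w' <;> by_cases hy : y ∈ Set.range w'
    · obtain ⟨p, rfl⟩ := hx
      obtain ⟨q, rfl⟩ := hy
      rw [hg_frame, hg_frame]
      exact (congrFun (congrFun htab p) q).mpr hxy
    · obtain ⟨p, rfl⟩ := hx
      rw [hg_frame, hg_outer y hy]
      exact (congrArg Prod.snd (congrFun (hH_type ⟨y, hy⟩) p)).mpr hxy
    · obtain ⟨q, rfl⟩ := hy
      rw [hg_frame, hg_outer x hx]
      exact (congrArg Prod.fst (congrFun (hH_type ⟨x, hx⟩) q)).mpr hxy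
    · rw [hg_outer x hx, hg_outer y hy]
      by_contra hnon
      rcases hw.2 _ _ hnon with h | h
      exacts [(H ⟨x, hx⟩).2 h, (H ⟨y, hy⟩).2 h]

theorem partiallyWellOrderedOn_isNonEdgeCover (s : ℕ) :
    {A : FinBinRel | ∃ w : Fin s → Fin A.n, IsNonEdgeCover A w}.PartiallyWellOrderedOn HomLe := by
  rw [Set.partiallyWellOrderedOn_iff_exists_lt]
  intro F hF
  choose w hw using hF
  obtain ⟨i, j, hij, h₁, h₂⟩ := (Finite.wellQuasiOrdered (· = ·)).prod wellQuasiOrdered_le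
    fun i => frameProfile (F i) (w i)
  exact ⟨i, j, hij, homLe_of_frameProfile (hw i) (hw j).1 h₁ h₂⟩

theorem partiallyWellOrderedOn_av_ndigraph {n k : ℕ} (hkn : 2 * k < n) :
    (Av (Ndigraph n k)).PartiallyWellOrderedOn HomLe := by
  refine ((finite_setOf_n_lt n).partiallyWellOrderedOn.union
    (partiallyWellOrderedOn_isNonEdgeCover (2 * k))).mono ?_
  rintro E ⟨hrefl, hE⟩
  by_cases hsmall : E.n < n
  · exact Or.inl hsmall
  · exact Or.inr (exists_isNonEdgeCover hrefl (by omega)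
      fun h => hE (homLe_ndigraph hkn (by omega) h))

theorem stmt_18_general (D : FinBinRel) :
    IsWqo HomLe {E | (∀ x : Fin E.n, E.rel x x) ∧ ¬ HomLe D E} ↔
      ∃ n k, 2 * k < n ∧ BinIso D (Ndigraph n k) := by
  constructor
  · intro hwqo
    have hcyc : ∀ i, ∀ x, (Cyc (i + 2)).rel x x := fun i => cyc_rel_self (by omega)
    have hcyc_anti : ∀ i j, i < j → ¬ HomLe (Cyc (i + 2)) (Cyc (j + 2)) :=
      fun i j hij => not_homLe_cyc (by omega) (by omega)
    exact exists_binIso_ndigraph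
      (hwqo.holds_of_antichain HomLe.nonEdgeFunctional
        (fun i => ⟨hcyc i, cyc_nonEdgeFunctional _⟩) hcyc_anti)
      (hwqo.holds_of_antichain HomLe.nonEdgeInjective
        (fun i => ⟨hcyc i, cyc_nonEdgeInjective _⟩) hcyc_anti)
      (hwqo.holds_of_antichain HomLe.noNonEdgePath
        (fun i => ⟨altCyc_rel_self (i + 3), altCyc_noNonEdgePath _⟩)
        fun i j hij => not_homLe_altCyc (by omega) (by omega))
      (hwqo.holds_of_antichain HomLe.hasUniversalVertex
        (fun i => ⟨hcyc i, cyc_hasUniversalVertex _⟩) hcyc_anti)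
  · rintro ⟨n, k, hkn, hiso⟩ f hf
    exact ((partiallyWellOrderedOn_av_ndigraph hkn).mono (av_subset_av hiso.homLe)).exists_lt hf

/-- For a reflexive digraph `D`, the avoidance class `Av(D)` within reflexive digraphs
under the homomorphic image ordering is well quasi-ordered iff `D` is a partial
subcomplete digraph `N⃗_{n,k}` with `2k < n`. -/
theorem stmt_18 (D : FinBinRel) (hD : ∀ x : Fin D.n, D.rel x x) :
    IsWqo HomLe {E | (∀ x : Fin E.n, E.rel x x) ∧ ¬ HomLe D E} ↔
      ∃ n k, 2 * k < n ∧ BinIso D (Ndigraph n k) :=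
  stmt_18_general D
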